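/- Let D be a unital C*-algebra, let B be a unital D-saturated C*-algebra, and let C ⊆ B be a separable sub-C*-algebra. Then the relative commutant C' ∩ B is D-saturated. -/

import Mathlib

/-!  Common framework for formalizing statements about C⋆-algebras, ultrapowers,
central sequence algebras, tensorial absorption, Cuntz semigroup comparison and
divisibility.  Objects that Mathlib does not construct (ultrapowers, quotients,
minimal tensor products, stabilizations, the Jiang–Su algebra, …) are treated via
predicates that characterize them uniquely up to isomorphism. -/

noncomputable section

set_option maxHeartbeats 1000000
set_option synthInstance.maxHeartbeats 1000000

open scoped ENNReal NNReal MultiplierAlgebra Kronecker Matrix.Norms.L2Operator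
open Filter Topology Matrix

universe u v w

namespace Paper

/-- A bundled non-unital C⋆-algebra. -/
structure CStarBundle : Type (u + 1) where
  carrier : Type u
  [inst : NonUnitalCStarAlgebra carrier]

attribute [instance] CStarBundle.inst

instance : CoeSort CStarBundle.{u} (Type u) := ⟨CStarBundle.carrier⟩

/-- A bundled unital C⋆-algebra. -/
structure UCStarBundle : Type (u + 1) where
  carrier : Type u
  [inst : CStarAlgebra carrier]

attribute [instance] UCStarBundle.inst

instance : CoeSort UCStarBundle.{u} (Type u) := ⟨UCStarBundle.carrier⟩

/-! ### Bounded sequences and ultrapowers -/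

/-- The C⋆-algebra `∏_ℕ A` of bounded sequences in `A`. -/
abbrev BddSeq (A : Type u) [NonUnitalCStarAlgebra A] : Type u := lp (fun _ : ℕ => A) ∞

/-- The constant sequence at `a`, as an element of `∏_ℕ A`. -/
def constSeq {A : Type u} [NonUnitalCStarAlgebra A] (a : A) : BddSeq A :=
  ⟨fun _ => a, memℓp_infty ⟨‖a‖, by rintro x ⟨i, rfl⟩; exact le_rfl⟩⟩

/-- A free ultrafilter on `ℕ`: one containing all cofinite sets. -/
def IsFreeUltrafilter (U : Ultrafilter ℕ) : Prop := (U : Filter ℕ) ≤ Filter.cofinite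

/-- `π : ∏_ℕ A → AU` realizes `AU` as the ultrapower `A_U`:  it is a surjective
⋆-homomorphism whose kernel is `c_U(A) = {(a_n) : lim_{n→U} ‖a_n‖ = 0}`. -/
def IsUltrapowerHom {A : Type u} [NonUnitalCStarAlgebra A] {AU : Type u}
    [NonUnitalCStarAlgebra AU] (U : Ultrafilter ℕ) (π : BddSeq A →⋆ₙₐ[ℂ] AU) : Prop :=
  Function.Surjective π ∧
    ∀ f : BddSeq A, π f = 0 ↔ Filter.Tendsto (fun n => ‖f n‖) (U : Filter ℕ) (𝓝 0)

/-- The canonical embedding of `A` into a realization of its ultrapower,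
via constant sequences. -/
def diagMap {A AU : Type u} [NonUnitalCStarAlgebra A] [NonUnitalCStarAlgebra AU]
    (π : BddSeq A →⋆ₙₐ[ℂ] AU) : A → AU :=
  fun a => π (constSeq a)

/-- The image of `A` inside (a realization of) its ultrapower. -/
def diagSet {A AU : Type u} [NonUnitalCStarAlgebra A] [NonUnitalCStarAlgebra AU]
    (π : BddSeq A →⋆ₙₐ[ℂ] AU) : Set AU :=
  Set.range (diagMap π)

/-! ### Commutants, annihilators and quotients -/

/-- The (two-sided) annihilator of a subset `S` of a C⋆-algebra. -/
def annihilatorSet {Q : Type u} [NonUnitalCStarAlgebra Q] (S : Set Q) : Set Q :=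
  {x | ∀ b ∈ S, x * b = 0 ∧ b * x = 0}

/-- `j : C → Q` realizes `C` as the relative commutant `S' ∩ Q` of the subset `S ⊆ Q`. -/
def IsCommutantRealization {Q C : Type u} [NonUnitalCStarAlgebra Q] [NonUnitalCStarAlgebra C]
    (S : Set Q) (j : C →⋆ₙₐ[ℂ] Q) : Prop :=
  Function.Injective j ∧ Set.range j = Set.centralizer S

/-- `ρ : C → Q` realizes `Q` as the quotient of `C` by the closed two-sided ideal `I`. -/
def IsQuotientHom {C Q : Type u} [NonUnitalCStarAlgebra C] [NonUnitalCStarAlgebra Q]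
    (ρ : C →⋆ₙₐ[ℂ] Q) (I : Set C) : Prop :=
  Function.Surjective ρ ∧ ∀ x : C, ρ x = 0 ↔ x ∈ I

/-! ### Minimal tensor products and `D`-stability -/

/-- `t` is a ⋆-representation of the algebraic tensor product `A ⊙ B` on `T`
with dense range. -/
def IsTensorRep {A : Type u} {B : Type v} {T : Type w} [NonUnitalCStarAlgebra A]
    [NonUnitalCStarAlgebra B] [NonUnitalCStarAlgebra T] (t : A →ₗ[ℂ] B →ₗ[ℂ] T) : Prop :=
  (∀ (a a' : A) (b b' : B), t a b * t a' b' = t (a * a') (b * b')) ∧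
  (∀ (a : A) (b : B), star (t a b) = t (star a) (star b)) ∧
  Dense (Submodule.span ℂ {x : T | ∃ a b, t a b = x} : Set T)

/-- `t : A × B → T` realizes `T` as the minimal (spatial) tensor product `A ⊗ B`:
it is an injective ⋆-representation of the algebraic tensor product with dense range,
satisfying `‖a ⊗ b‖ = ‖a‖‖b‖`, and whose C⋆-norm is minimal:  every other C⋆-completion
of the algebraic tensor product maps onto it. -/
def IsMinTensorProduct {A : Type u} {B : Type v} {T : Type w} [NonUnitalCStarAlgebra A]
    [NonUnitalCStarAlgebra B] [NonUnitalCStarAlgebra T] (t : A →ₗ[ℂ] B →ₗ[ℂ] T) : Prop :=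
  IsTensorRep t ∧
  (∀ (a : A) (b : B), ‖t a b‖ = ‖a‖ * ‖b‖) ∧
  Function.Injective (TensorProduct.lift t) ∧
  ∀ (T' : CStarBundle.{max u v}) (t' : A →ₗ[ℂ] B →ₗ[ℂ] T'.carrier), IsTensorRep t' →
    ∃ ψ : T'.carrier →⋆ₙₐ[ℂ] T, ∀ a b, ψ (t' a b) = t a b

/-- `A` is `D`-stable (for unital `D`):  `A ≅ A ⊗ D` (minimal tensor product). -/
def DStable (A : Type u) [NonUnitalCStarAlgebra A] (D : Type v) [CStarAlgebra D] : Prop :=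
  ∃ (T : CStarBundle.{max u v}) (t : A →ₗ[ℂ] D →ₗ[ℂ] T.carrier),
    IsMinTensorProduct t ∧ Nonempty (A ≃⋆ₐ[ℂ] T.carrier)

/-- `D` is strongly self-absorbing: it is separable, unital, `D ≠ ℂ`, and there is an
isomorphism `D ≅ D ⊗ D` which is approximately unitarily equivalent to `id_D ⊗ 1_D`. -/
def IsStronglySelfAbsorbing (D : Type v) [CStarAlgebra D] : Prop :=
  TopologicalSpace.SeparableSpace D ∧
  ¬ Function.Surjective (algebraMap ℂ D) ∧
  ∃ (T : UCStarBundle.{v}) (t : D →ₗ[ℂ] D →ₗ[ℂ] T.carrier),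
    IsMinTensorProduct t ∧
    ∃ θ : D ≃⋆ₐ[ℂ] T.carrier,
      ∀ (F : Finset D) (ε : ℝ), 0 < ε →
        ∃ u : T.carrier, u ∈ unitary T.carrier ∧
          ∀ d ∈ F, ‖u * θ d * star u - t d 1‖ < ε

/-- A characterization of the Jiang–Su algebra `𝒵`:  it is the (unique) strongly
self-absorbing C⋆-algebra admitting a unital embedding into every strongly
self-absorbing C⋆-algebra. -/
def IsJiangSu (Z : Type v) [CStarAlgebra Z] : Prop :=
  IsStronglySelfAbsorbing Z ∧
  ∀ D : UCStarBundle.{v}, IsStronglySelfAbsorbing D.carrier →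
    ∃ ψ : Z →⋆ₐ[ℂ] D.carrier, Function.Injective ψ

/-- `A` is `𝒵`-stable. -/
def IsZStable (A : Type u) [NonUnitalCStarAlgebra A] : Prop :=
  ∀ Z : UCStarBundle.{u}, IsJiangSu Z.carrier → DStable A Z.carrier

/-- A characterization of the Cuntz algebra `𝒪∞`:  it is generated by a sequence of
isometries with mutually orthogonal ranges, and it is universal for such sequences. -/
def IsCuntzOInfinity (O : Type v) [CStarAlgebra O] : Prop :=
  ∃ s : ℕ → O,
    (∀ i j, star (s i) * s j = if i = j then 1 else 0) ∧
    (StarAlgebra.adjoin ℂ (Set.range s)).topologicalClosure = ⊤ ∧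
    ∀ (B : UCStarBundle.{v}) (w : ℕ → B.carrier),
      (∀ i j, star (w i) * w j = if i = j then 1 else 0) →
      ∃ φ : O →⋆ₐ[ℂ] B.carrier, ∀ i, φ (s i) = w i

/-- `A` is `𝒪∞`-stable. -/
def IsOInfinityStable (A : Type u) [NonUnitalCStarAlgebra A] : Prop :=
  ∀ O : UCStarBundle.{u}, IsCuntzOInfinity O.carrier → DStable A O.carrier

/-! ### Separable `D`-stability and `D`-saturation -/

/-- `A` is separably `D`-stable:  every separable sub-C⋆-algebra of `A` is contained in a
separable `D`-stable sub-C⋆-algebra of `A`.  (Sub-C⋆-algebras are realized as injective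
⋆-homomorphisms from C⋆-algebras: their ranges are exactly the closed ⋆-subalgebras.) -/
def SeparablyDStable (A : Type u) [NonUnitalCStarAlgebra A] (D : Type v) [CStarAlgebra D] :
    Prop :=
  ∀ (B₀ : CStarBundle.{u}) (j₀ : B₀.carrier →⋆ₙₐ[ℂ] A),
    Function.Injective j₀ → TopologicalSpace.SeparableSpace B₀.carrier →
    ∃ (B : CStarBundle.{u}) (j : B.carrier →⋆ₙₐ[ℂ] A),
      Function.Injective j ∧ TopologicalSpace.SeparableSpace B.carrier ∧
      DStable B.carrier D ∧ Set.range j₀ ⊆ Set.range j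

/-- `A` is separably `𝒵`-stable. -/
def IsSeparablyZStable (A : Type u) [NonUnitalCStarAlgebra A] : Prop :=
  ∀ Z : UCStarBundle.{u}, IsJiangSu Z.carrier → SeparablyDStable A Z.carrier

/-- A unital C⋆-algebra `Q` is `D`-saturated if for every separable sub-C⋆-algebra
`B ⊆ Q` there is a unital ⋆-embedding `D → B' ∩ Q`. -/
def DSaturated (D : Type v) [CStarAlgebra D] (Q : Type u) [CStarAlgebra Q] : Prop :=
  ∀ (B : CStarBundle.{u}) (j : B.carrier →⋆ₙₐ[ℂ] Q),
    Function.Injective j → TopologicalSpace.SeparableSpace B.carrier →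
    ∃ ψ : D →⋆ₐ[ℂ] Q, Function.Injective ψ ∧ ∀ d, ψ d ∈ Set.centralizer (Set.range j)

/-! ### Approximate units -/

/-- `e` is a contractive (sequential) approximate identity for `A`. -/
def IsContractiveApproxUnit {A : Type u} [NonUnitalCStarAlgebra A] (e : ℕ → A) : Prop :=
  (∀ n, ‖e n‖ ≤ 1) ∧
  ∀ a : A, Filter.Tendsto (fun n => ‖e n * a - a‖) Filter.atTop (𝓝 0) ∧
    Filter.Tendsto (fun n => ‖a * e n - a‖) Filter.atTop (𝓝 0)

/-- `A` is σ-unital (it admits a countable contractive approximate identity). -/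
def IsSigmaUnital (A : Type u) [NonUnitalCStarAlgebra A] : Prop :=
  ∃ e : ℕ → A, IsContractiveApproxUnit e

/-! ### Stabilizations and the Cuntz semigroup -/

/-- The upper-left corner embedding of `n × n` matrices into `(n+1) × (n+1)` matrices. -/
def matExt {A : Type u} [Zero A] {n : ℕ} (a : Matrix (Fin n) (Fin n) A) :
    Matrix (Fin (n + 1)) (Fin (n + 1)) A :=
  Matrix.of fun i j =>
    if h : (i : ℕ) < n then if h' : (j : ℕ) < n then a ⟨i, h⟩ ⟨j, h'⟩ else 0 else 0

/-- `φ` realizes `SA` as the stabilization `A ⊗ 𝒦`:  the maps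
`φ n : M_n(A) → SA` are compatible injective ⋆-homomorphisms with dense union of ranges. -/
def IsStabilization {A SA : Type u} [NonUnitalCStarAlgebra A] [NonUnitalCStarAlgebra SA]
    (φ : ∀ n : ℕ, Matrix (Fin n) (Fin n) A → SA) : Prop :=
  (∀ n (a b : Matrix (Fin n) (Fin n) A), φ n (a + b) = φ n a + φ n b) ∧
  (∀ n (c : ℂ) (a : Matrix (Fin n) (Fin n) A), φ n (c • a) = c • φ n a) ∧
  (∀ n (a b : Matrix (Fin n) (Fin n) A), φ n (a * b) = φ n a * φ n b) ∧
  (∀ n (a : Matrix (Fin n) (Fin n) A), φ n aᴴ = star (φ n a)) ∧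
  (∀ n, Function.Injective (φ n)) ∧
  (∀ n (a : Matrix (Fin n) (Fin n) A), φ (n + 1) (matExt a) = φ n a) ∧
  Dense (⋃ n, Set.range (φ n))

/-- `A` is a stable C⋆-algebra: `A ≅ A ⊗ 𝒦`. -/
def IsStable (A : Type u) [NonUnitalCStarAlgebra A] : Prop :=
  ∃ (SA : CStarBundle.{u}) (φ : ∀ n : ℕ, Matrix (Fin n) (Fin n) A → SA.carrier),
    IsStabilization φ ∧ Nonempty (A ≃⋆ₐ[ℂ] SA.carrier)

/-- Positivity in a C⋆-algebra. -/
def IsPos {B : Type u} [NonUnitalCStarAlgebra B] (a : B) : Prop :=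
  ∃ c, a = star c * c

/-- Cuntz subequivalence `a ≾ b` of elements of a C⋆-algebra. -/
def CuntzLE {B : Type u} [NonUnitalCStarAlgebra B] (a b : B) : Prop :=
  ∀ ε : ℝ, 0 < ε → ∃ x : B, ‖star x * b * x - a‖ < ε

/-- Cuntz subequivalence of matrices (of possibly different sizes) over a C⋆-algebra.
(For fixed matrix size, entrywise approximation is equivalent to norm approximation.) -/
def MCuntzLE {B : Type u} [NonUnitalCStarAlgebra B] {m k : ℕ}
    (a : Matrix (Fin m) (Fin m) B) (b : Matrix (Fin k) (Fin k) B) : Prop :=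
  ∀ ε : ℝ, 0 < ε → ∃ x : Matrix (Fin k) (Fin m) B, ∀ i j, ‖(xᴴ * b * x - a) i j‖ < ε

/-- The diagonal matrix `diag(b, …, b)` of size `k`, representing `k·[b]` in the
Cuntz semigroup. -/
def matDiag {B : Type u} [NonUnitalCStarAlgebra B] (k : ℕ) (b : B) :
    Matrix (Fin k) (Fin k) B :=
  Matrix.diagonal fun _ => b

/-- The cut-down `(a - ε)₊`, via the (non-unital) continuous functional calculus. -/
def cutoff {B : Type u} [NonUnitalCStarAlgebra B] (ε : ℝ) (a : B) : B :=
  cfcₙ (fun t : ℝ => max (t - ε) 0) a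

/-- The way-below (compact containment) relation `[a'] ≪ [a]` of Cuntz classes;
by a standard fact it is equivalent to `a' ≾ (a - ε)₊` for some `ε > 0`. -/
def CuWayBelow {B : Type u} [NonUnitalCStarAlgebra B] (a' a : B) : Prop :=
  ∃ ε : ℝ, 0 < ε ∧ CuntzLE a' (cutoff ε a)

/-- Strict comparison for a *stable* C⋆-algebra `S` (every Cuntz class of which is
represented by a positive element of `S`):  `x <ₛ y` implies `x ≤ y` in `Cu(S)`. -/
def StrictComparisonStable (S : Type u) [NonUnitalCStarAlgebra S] : Prop :=
  ∀ a b : S, IsPos a → IsPos b →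
    (∃ n : ℕ, MCuntzLE (matDiag (n + 1) a) (matDiag n b)) → CuntzLE a b

/-- `N`-almost divisibility for a *stable* C⋆-algebra `S`:  for `x' ≪ x` in `Cu(S)` and
`k ∈ ℕ` there is `y` with `k·y ≤ x` and `x' ≤ (N+1)(k+1)·y`. -/
def AlmostDivisibleStable (N : ℕ) (S : Type u) [NonUnitalCStarAlgebra S] : Prop :=
  ∀ a a' : S, IsPos a → IsPos a' → CuWayBelow a' a → ∀ k : ℕ,
    ∃ y : S, IsPos y ∧ MCuntzLE (matDiag k y) (matDiag 1 a) ∧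
      MCuntzLE (matDiag 1 a') (matDiag ((N + 1) * (k + 1)) y)

/-- `A` has strict comparison (i.e. `Cu(A)` is almost unperforated). -/
def HasStrictComparison (A : Type u) [NonUnitalCStarAlgebra A] : Prop :=
  ∀ (SA : CStarBundle.{u}) (φ : ∀ n : ℕ, Matrix (Fin n) (Fin n) A → SA.carrier),
    IsStabilization φ → StrictComparisonStable SA.carrier

/-- `A` is `N`-almost divisible. -/
def IsNAlmostDivisible (N : ℕ) (A : Type u) [NonUnitalCStarAlgebra A] : Prop :=
  ∀ (SA : CStarBundle.{u}) (φ : ∀ n : ℕ, Matrix (Fin n) (Fin n) A → SA.carrier),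
    IsStabilization φ → AlmostDivisibleStable N SA.carrier

/-- `A` is pure:  it has strict comparison and is almost divisible. -/
def IsPureCStar (A : Type u) [NonUnitalCStarAlgebra A] : Prop :=
  HasStrictComparison A ∧ IsNAlmostDivisible 0 A

/-- A single element `x` of (a stabilization of) a C⋆-algebra is `N`-almost divisible. -/
def ElemNAlmostDivisible (N : ℕ) {S : Type u} [NonUnitalCStarAlgebra S] (x : S) : Prop :=
  ∀ x' : S, IsPos x' → CuWayBelow x' x → ∀ k : ℕ,
    ∃ y : S, IsPos y ∧ MCuntzLE (matDiag k y) (matDiag 1 x) ∧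
      MCuntzLE (matDiag 1 x') (matDiag ((N + 1) * (k + 1)) y)

/-! ### Quasitraces and controlled comparison -/

/-- A lower semicontinuous 2-quasitrace on a C⋆-algebra `S` (stated for a stable algebra
`S`, on which every densely finite quasitrace of `A` extends). -/
structure IsLscQuasitrace {S : Type u} [NonUnitalCStarAlgebra S] (τ : S → ℝ≥0∞) : Prop where
  map_zero : τ 0 = 0
  map_add : ∀ a b : S, IsPos a → IsPos b → a * b = b * a → τ (a + b) = τ a + τ b
  tracial : ∀ x : S, τ (star x * x) = τ (x * star x)
  map_smul : ∀ (c : ℝ≥0) (a : S), IsPos a → τ (((c : ℝ) : ℂ) • a) = (c : ℝ≥0∞) * τ a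
  lsc : LowerSemicontinuous τ
  two_quasitrace : ∃ τ₂ : Matrix (Fin 2) (Fin 2) S → ℝ≥0∞,
    (∀ a b : Matrix (Fin 2) (Fin 2) S, (∃ c, a = cᴴ * c) → (∃ c, b = cᴴ * c) →
      a * b = b * a → τ₂ (a + b) = τ₂ a + τ₂ b) ∧
    (∀ x : Matrix (Fin 2) (Fin 2) S, τ₂ (xᴴ * x) = τ₂ (x * xᴴ)) ∧
    (∀ a : S, τ₂ (Matrix.diagonal ![a, 0]) = τ a)

/-- The dimension function `d_τ` associated to a quasitrace `τ`:
`d_τ(a) = lim_n τ(a^{1/n}) = sup_{ε>0} τ((a-ε)₊)`. -/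
def dimFn {S : Type u} [NonUnitalCStarAlgebra S] (τ : S → ℝ≥0∞) (a : S) : ℝ≥0∞ :=
  ⨆ (ε : ℝ) (_ : 0 < ε), τ (cutoff ε a)

/-- Controlled comparison relative to a stabilization `φ` of `A`:  for every `γ ∈ (0,1)`
and `d ≥ 1` there is `N ≥ 1` such that `[a]^ ≤ γ·[b]^` implies `[a] ≤_N [b]` for all
positive `a, b ∈ M_d(A)`. -/
def ControlledComparisonWrt {A SA : Type u} [NonUnitalCStarAlgebra A]
    [NonUnitalCStarAlgebra SA] (φ : ∀ n : ℕ, Matrix (Fin n) (Fin n) A → SA) : Prop :=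
  ∀ γ : ℝ, 0 < γ → γ < 1 → ∀ d : ℕ, 1 ≤ d →
    ∃ N : ℕ, 1 ≤ N ∧
      ∀ a b : Matrix (Fin d) (Fin d) A, (∃ c, a = cᴴ * c) → (∃ c, b = cᴴ * c) →
        (∀ τ : SA → ℝ≥0∞, IsLscQuasitrace τ →
          dimFn τ (φ d a) ≤ ENNReal.ofReal γ * dimFn τ (φ d b)) →
        ∀ n : ℕ, N ≤ n → MCuntzLE (matDiag n (φ d a)) (matDiag n (φ d b))

/-- `A` has controlled comparison. -/
def HasControlledComparison (A : Type u) [NonUnitalCStarAlgebra A] : Prop :=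
  ∀ (SA : CStarBundle.{u}) (φ : ∀ n : ℕ, Matrix (Fin n) (Fin n) A → SA.carrier),
    IsStabilization φ → ControlledComparisonWrt φ

/-! ### Pure infiniteness -/

/-- The closed two-sided ideal generated by an element `b` of a C⋆-algebra. -/
def idealGenBy {B : Type u} [NonUnitalCStarAlgebra B] (b : B) : Set B :=
  closure (Submodule.span ℂ {y : B | ∃ x z : B, y = x * b * z} : Set B)

/-- `B` is purely infinite in the sense of Kirchberg–Rørdam:  `B` admits no characters,
and `a ≾ b` whenever `a` lies in the closed ideal generated by `b` (`a, b` positive). -/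
def IsPurelyInfinite (B : Type u) [NonUnitalCStarAlgebra B] : Prop :=
  (∀ (χ : B →⋆ₙₐ[ℂ] ℂ) (x : B), χ x = 0) ∧
  ∀ a b : B, IsPos a → IsPos b → a ∈ idealGenBy b → CuntzLE a b

/-! ### Dimension-drop algebras -/

/-- `M_m ⊗ M_k` realized as operators on `ℂ^m ⊗ ℂ^k`. -/
abbrev OpAlg (m k : ℕ) : Type :=
  EuclideanSpace ℂ (Fin m × Fin k) →L[ℂ] EuclideanSpace ℂ (Fin m × Fin k)

/-- The unital ⋆-homomorphism `M_m → M_m ⊗ M_k`, `a ↦ a ⊗ 1`. -/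
def kronLeftHom (m k : ℕ) :
    Matrix (Fin m) (Fin m) ℂ →⋆ₐ[ℂ] Matrix (Fin m × Fin k) (Fin m × Fin k) ℂ where
  toFun a := a ⊗ₖ (1 : Matrix (Fin k) (Fin k) ℂ)
  map_one' := Matrix.one_kronecker_one
  map_mul' a b := by rw [← Matrix.mul_kronecker_mul, one_mul]
  map_zero' := Matrix.zero_kronecker 1
  map_add' a b := Matrix.add_kronecker a b 1
  commutes' c := by
    simp only [Algebra.algebraMap_eq_smul_one, Matrix.smul_kronecker, Matrix.one_kronecker_one]
  map_star' a := by
    ext ⟨i, i'⟩ ⟨j, j'⟩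
    simp [Matrix.conjTranspose_apply, Matrix.kroneckerMap_apply, Matrix.one_apply, eq_comm,
      apply_ite (star : ℂ → ℂ)]

/-- The unital ⋆-homomorphism `M_k → M_m ⊗ M_k`, `b ↦ 1 ⊗ b`. -/
def kronRightHom (m k : ℕ) :
    Matrix (Fin k) (Fin k) ℂ →⋆ₐ[ℂ] Matrix (Fin m × Fin k) (Fin m × Fin k) ℂ where
  toFun b := (1 : Matrix (Fin m) (Fin m) ℂ) ⊗ₖ b
  map_one' := Matrix.one_kronecker_one
  map_mul' a b := by rw [← Matrix.mul_kronecker_mul, one_mul]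
  map_zero' := Matrix.kronecker_zero 1
  map_add' a b := Matrix.kronecker_add 1 a b
  commutes' c := by
    simp only [Algebra.algebraMap_eq_smul_one, Matrix.kronecker_smul, Matrix.one_kronecker_one]
  map_star' b := by
    ext ⟨i, i'⟩ ⟨j, j'⟩
    simp [Matrix.conjTranspose_apply, Matrix.kroneckerMap_apply, Matrix.one_apply, eq_comm,
      apply_ite (star : ℂ → ℂ)]

/-- The ambient algebra `C([0,1], M_n ⊗ M_{n+1})` of the dimension-drop algebra.
(A definitional wrapper, so that it carries a single canonical C⋆-algebra structure.) -/
def DDAmbient (n : ℕ) : Type := C(unitInterval, OpAlg n (n + 1))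

noncomputable instance (n : ℕ) : CStarAlgebra (DDAmbient n) :=
  inferInstanceAs (CStarAlgebra C(unitInterval, OpAlg n (n + 1)))

/-- Evaluation at a point of `[0,1]`, as a unital ⋆-homomorphism. -/
def evalDD (n : ℕ) (x : unitInterval) : DDAmbient n →⋆ₐ[ℂ] OpAlg n (n + 1) where
  toFun f := (show C(unitInterval, OpAlg n (n + 1)) from f) x
  map_one' := rfl
  map_mul' _ _ := rfl
  map_zero' := rfl
  map_add' _ _ := rfl
  commutes' _ := rfl
  map_star' _ := rfl

/-- The subalgebra `M_n ⊗ 1 ⊆ M_n ⊗ M_{n+1}` (as operators). -/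
def leftCorner (n : ℕ) : StarSubalgebra ℂ (OpAlg n (n + 1)) :=
  (((Matrix.toEuclideanCLM (𝕜 := ℂ) (n := Fin n × Fin (n + 1))) :
      Matrix (Fin n × Fin (n + 1)) (Fin n × Fin (n + 1)) ℂ →⋆ₐ[ℂ] OpAlg n (n + 1)).comp
    (kronLeftHom n (n + 1))).range

/-- The subalgebra `1 ⊗ M_{n+1} ⊆ M_n ⊗ M_{n+1}` (as operators). -/
def rightCorner (n : ℕ) : StarSubalgebra ℂ (OpAlg n (n + 1)) :=
  (((Matrix.toEuclideanCLM (𝕜 := ℂ) (n := Fin n × Fin (n + 1))) :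
      Matrix (Fin n × Fin (n + 1)) (Fin n × Fin (n + 1)) ℂ →⋆ₐ[ℂ] OpAlg n (n + 1)).comp
    (kronRightHom n (n + 1))).range

/-- The dimension-drop algebra
`Z_{n,n+1} = {f ∈ C([0,1], M_n ⊗ M_{n+1}) : f(0) ∈ M_n ⊗ 1, f(1) ∈ 1 ⊗ M_{n+1}}`. -/
def DimDrop (n : ℕ) : StarSubalgebra ℂ (DDAmbient n) :=
  (StarSubalgebra.comap (evalDD n 0) (leftCorner n)) ⊓
    (StarSubalgebra.comap (evalDD n 1) (rightCorner n))

theorem leftCorner_isClosed (n : ℕ) : IsClosed ((leftCorner n : Set (OpAlg n (n + 1)))) := by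
  have : ((leftCorner n : Set (OpAlg n (n + 1)))) =
      Set.range ((((Matrix.toEuclideanCLM (𝕜 := ℂ) (n := Fin n × Fin (n + 1))) :
          Matrix (Fin n × Fin (n + 1)) (Fin n × Fin (n + 1)) ℂ →⋆ₐ[ℂ] OpAlg n (n + 1)).comp
        (kronLeftHom n (n + 1))).toLinearMap) := rfl
  rw [this, ← LinearMap.coe_range]
  exact Submodule.closed_of_finiteDimensional _

theorem rightCorner_isClosed (n : ℕ) : IsClosed ((rightCorner n : Set (OpAlg n (n + 1)))) := by
  have : ((rightCorner n : Set (OpAlg n (n + 1)))) =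
      Set.range ((((Matrix.toEuclideanCLM (𝕜 := ℂ) (n := Fin n × Fin (n + 1))) :
          Matrix (Fin n × Fin (n + 1)) (Fin n × Fin (n + 1)) ℂ →⋆ₐ[ℂ] OpAlg n (n + 1)).comp
        (kronRightHom n (n + 1))).toLinearMap) := rfl
  rw [this, ← LinearMap.coe_range]
  exact Submodule.closed_of_finiteDimensional _

instance DimDrop.instIsClosed (n : ℕ) :
    IsClosed ((DimDrop n : Set (DDAmbient n))) := by
  have h0 : Continuous fun f : DDAmbient n => evalDD n 0 f := by
    have h : Continuous fun f : C(unitInterval, OpAlg n (n + 1)) => f (0 : unitInterval) :=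
      ContinuousEvalConst.continuous_eval_const _
    exact h
  have h1 : Continuous fun f : DDAmbient n => evalDD n 1 f := by
    have h : Continuous fun f : C(unitInterval, OpAlg n (n + 1)) => f (1 : unitInterval) :=
      ContinuousEvalConst.continuous_eval_const _
    exact h
  show IsClosed (((fun f : DDAmbient n => evalDD n 0 f) ⁻¹'
      (leftCorner n : Set (OpAlg n (n + 1)))) ∩
    ((fun f : DDAmbient n => evalDD n 1 f) ⁻¹'
      (rightCorner n : Set (OpAlg n (n + 1)))))
  exact ((leftCorner_isClosed n).preimage h0).inter ((rightCorner_isClosed n).preimage h1)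

noncomputable instance (n : ℕ) : CStarAlgebra (DimDrop n) :=
  StarSubalgebra.cstarAlgebra (DimDrop n)

/-! Given a separable sub-C⋆-algebra `E` of `C' ∩ B`, the sub-C⋆-algebra of `B` generated by
`C` and `E` is again separable, so `D`-saturation of `B` gives a unital embedding of `D` into `B`
commuting with both. Commuting with `C`, it takes values in `C' ∩ B`, where it commutes with `E`. -/

open TopologicalSpace

theorem _root_.Submonoid.countable_closure {M : Type*} [Monoid M] {s : Set M} (hs : s.Countable) :
    (Submonoid.closure s : Set M).Countable := by
  have := hs.to_subtype
  have : Countable (FreeMonoid s) := inferInstanceAs (Countable (List s))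
  rw [Submonoid.closure_eq_mrange, MonoidHom.coe_mrange]
  exact Set.countable_range _

theorem _root_.TopologicalSpace.IsSeparable.submonoidClosure {M : Type*} [Monoid M]
    [TopologicalSpace M] [ContinuousMul M] {s : Set M} (hs : IsSeparable s) :
    IsSeparable (Submonoid.closure s : Set M) := by
  obtain ⟨t, htc, hst⟩ := hs
  refine ⟨_, Submonoid.countable_closure htc, ?_⟩
  exact Submonoid.closure_le (S := (Submonoid.closure t).topologicalClosure).mpr
    (hst.trans (closure_mono Submonoid.subset_closure))

theorem _root_.TopologicalSpace.IsSeparable.starAlgebraAdjoin {R A : Type*} [CommSemiring R]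
    [StarRing R] [TopologicalSpace R] [SeparableSpace R] [Semiring A] [StarRing A] [Algebra R A]
    [StarModule R A] [TopologicalSpace A] [ContinuousAdd A] [ContinuousMul A] [ContinuousStar A]
    [ContinuousSMul R A] {s : Set A} (hs : IsSeparable s) :
    IsSeparable (StarAlgebra.adjoin R s : Set A) := by
  have hstar : IsSeparable (star s) := Set.image_star (s := s) ▸ hs.image continuous_star
  have h := (hs.union hstar).submonoidClosure.span (R := R)
  rwa [← StarAlgebra.adjoin_eq_span] at h

theorem DSaturated.exists_injective_forall_mem_centralizer {D : Type v} [CStarAlgebra D]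
    {B : Type u} [CStarAlgebra B] (hB : DSaturated D B) {V : Set B}
    (hV : IsSeparable V) :
    ∃ ψ : D →⋆ₐ[ℂ] B, Function.Injective ψ ∧ ∀ d, ψ d ∈ V.centralizer := by
  set S := StarAlgebra.adjoin ℂ V
  set E := S.topologicalClosure
  have hE : SeparableSpace E := hV.starAlgebraAdjoin.closure.separableSpace
  have : IsClosed (E : Set B) := S.isClosed_topologicalClosure
  obtain ⟨ψ, hψ, hψE⟩ :=
    hB ⟨E⟩ (StarSubalgebra.subtype E).toNonUnitalStarAlgHom Subtype.val_injective hE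
  refine ⟨ψ, hψ, fun d => Set.centralizer_subset (fun x hx => ?_) (hψE d)⟩
  exact ⟨⟨x, S.le_topologicalClosure (StarAlgebra.subset_adjoin ℂ V hx)⟩, rfl⟩

theorem _root_.map_one_of_injective_of_one_mem_range {F M N : Type*} [MulOneClass M]
    [MulOneClass N] [FunLike F M N] [MulHomClass F M N] {f : F} (hf : Function.Injective f)
    (h1 : 1 ∈ Set.range f) : f 1 = 1 := by
  obtain ⟨e, he⟩ := h1
  have he1 : e = 1 := by
    simpa using hf (show f (e * 1) = f 1 by rw [map_mul, he, one_mul])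
  rw [← he, he1]

theorem _root_.NonUnitalStarAlgHom.exists_starAlgHom_lift {R A B D : Type*} [CommSemiring R]
    [Semiring A] [Algebra R A] [Star A] [Semiring B] [Algebra R B] [Star B]
    [Semiring D] [Algebra R D] [Star D]
    (φ : A →⋆ₙₐ[R] B) (hφ : Function.Injective φ) (hφ1 : φ 1 = 1)
    (ψ : D →⋆ₐ[R] B) (hψ : ∀ d, ψ d ∈ Set.range φ) :
    ∃ θ : D →⋆ₐ[R] A, ∀ d, φ (θ d) = ψ d := by
  choose θ hθ using hψ
  refine ⟨{ toFun := θ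
            map_one' := hφ (by rw [hθ, map_one, hφ1])
            map_mul' := fun x y => hφ (by simp only [hθ, map_mul])
            map_zero' := hφ (by simp only [hθ, map_zero])
            map_add' := fun x y => hφ (by simp only [hθ, map_add])
            commutes' := fun r => hφ (by
              rw [hθ, AlgHomClass.commutes, Algebra.algebraMap_eq_smul_one,
                Algebra.algebraMap_eq_smul_one, map_smul, hφ1])
            map_star' := fun x => hφ (by simp only [hθ, map_star]) }, hθ⟩

open scoped CStarAlgebra in
theorem stmt_5_general (D : Type v) [CStarAlgebra D] (B : Type u) [CStarAlgebra B]
    (hB : DSaturated D B)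
    (C : CStarBundle.{u}) (j : C.carrier →⋆ₙₐ[ℂ] B)
    (hsep : TopologicalSpace.SeparableSpace C.carrier)
    (Q : Type u) [CStarAlgebra Q] (jq : Q →⋆ₙₐ[ℂ] B)
    (hq : IsCommutantRealization (Set.range j) jq) :
    DSaturated D Q := by
  obtain ⟨hjq, hrange⟩ := hq
  intro E ι _ _
  have hV : IsSeparable (Set.range j ∪ Set.range (jq.comp ι)) :=
    (isSeparable_range (map_continuous j)).union (isSeparable_range (map_continuous _))
  obtain ⟨ψ, hψ, hψV⟩ := hB.exists_injective_forall_mem_centralizer hV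
  have hψQ : ∀ d, ψ d ∈ Set.range jq := fun d =>
    hrange ▸ Set.centralizer_subset Set.subset_union_left (hψV d)
  have hjq1 : jq 1 = 1 :=
    map_one_of_injective_of_one_mem_range hjq (hrange ▸ Set.one_mem_centralizer)
  obtain ⟨θ, hθ⟩ := jq.exists_starAlgHom_lift hjq hjq1 ψ hψQ
  refine ⟨θ, fun a b hab => hψ (by rw [← hθ, ← hθ, hab]), ?_⟩
  rintro d _ ⟨x, rfl⟩
  apply hjq
  simpa only [map_mul, hθ] using hψV d (jq (ι x)) (Or.inr ⟨x, rfl⟩)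

/-- Let `D` be a unital C⋆-algebra, `B` a unital `D`-saturated
C⋆-algebra, and `C ⊆ B` a separable sub-C⋆-algebra.  Then the relative commutant
`C' ∩ B` is `D`-saturated. -/
theorem stmt_5 (D : Type v) [CStarAlgebra D] (B : Type u) [CStarAlgebra B]
    (hB : DSaturated D B)
    (C : CStarBundle.{u}) (j : C.carrier →⋆ₙₐ[ℂ] B) (hj : Function.Injective j)
    (hsep : TopologicalSpace.SeparableSpace C.carrier)
    (Q : Type u) [CStarAlgebra Q] (jq : Q →⋆ₙₐ[ℂ] B)
    (hq : IsCommutantRealization (Set.range j) jq) :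
    DSaturated D Q :=
  stmt_5_general D B hB C j hsep Q jq hq

end Paper
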